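/- arXiv:2604.26756 — 7 statements merged into one kernel-verified Lean document; each statement's English description precedes it below -/
import Mathlib

section
/- Let C be an integer code of length n, amplitude N = q₁⋯qₙ, cardinality K = |C| ≥ 2, and minimum weighted distance D = D(C). Then for every set of coordinates I ⊆ {1,…,n} with wt(I) < D, one has K · wt(I) ≤ N. -/
/-- The weight of a set `I` of coordinates: the product of the moduli indexed by `I`. -/
def wtS {ι : Type} (q : ι → ℕ) (I : Finset ι) : ℕ := ∏ i ∈ I, q i

/-- The weighted distance between two vectors of `ℤ/q₁ℤ × ⋯ × ℤ/qₙℤ`. -/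
def wdist {ι : Type} [Fintype ι] (q : ι → ℕ) (a b : ∀ i : ι, ZMod (q i)) : ℕ :=
  ∏ i ∈ Finset.univ.filter (fun i => a i ≠ b i), q i

/-- The minimum weighted distance of an integer code `C ⊆ ℤ/q₁ℤ × ⋯ × ℤ/qₙℤ`. -/
noncomputable def minDist {ι : Type} [Fintype ι] (q : ι → ℕ)
    (C : Finset (∀ i : ι, ZMod (q i))) : ℕ :=
  sInf {d : ℕ | ∃ a ∈ C, ∃ b ∈ C, a ≠ b ∧ d = wdist q a b}

/-!
Two distinct codewords differ in a set of coordinates of weight at least `D`, so if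
`wt(I) < D` they cannot agree outside `I`. Hence restricting codewords to the complement of `I`
is injective on `C`, which gives `K ≤ wt(Iᶜ) = N / wt(I)`.
-/

theorem card_pi_subtype_zmod {ι : Type} [DecidableEq ι] (q : ι → ℕ) [∀ i, NeZero (q i)]
    (s : Finset ι) :
    Fintype.card (∀ i : s, ZMod (q i)) = ∏ i ∈ s, q i := by
  rw [Fintype.card_pi, ← Finset.prod_coe_sort s q]
  exact Finset.prod_congr rfl fun i _ => ZMod.card (q i)

section

variable {ι : Type} [Fintype ι] (q : ι → ℕ)

theorem minDist_le_wdist {C : Finset (∀ i : ι, ZMod (q i))} {a b : ∀ i : ι, ZMod (q i)}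
    (ha : a ∈ C) (hb : b ∈ C) (hab : a ≠ b) : minDist q C ≤ wdist q a b :=
  Nat.sInf_le ⟨a, ha, b, hb, hab, rfl⟩

theorem wdist_le_wtS_of_eqOn_compl [DecidableEq ι] (hq : ∀ i, 0 < q i) {I : Finset ι}
    {a b : ∀ i : ι, ZMod (q i)} (h : ∀ i ∉ I, a i = b i) : wdist q a b ≤ wtS q I := by
  refine Finset.prod_le_prod_of_subset_of_one_le' (fun i hi => ?_) (fun i _ _ => hq i)
  by_contra hiI
  exact (Finset.mem_filter.mp hi).2 (h i hiI)

theorem injOn_restrict_compl_of_wtS_lt_minDist [DecidableEq ι] (hq : ∀ i, 0 < q i)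
    {C : Finset (∀ i : ι, ZMod (q i))} {I : Finset ι} (hI : wtS q I < minDist q C) :
    Set.InjOn Iᶜ.restrict (C : Set (∀ i : ι, ZMod (q i))) := by
  intro a ha b hb hab
  by_contra hne
  have hagree : ∀ i ∉ I, a i = b i := fun i hi =>
    congrFun hab ⟨i, Finset.mem_compl.mpr hi⟩
  have := wdist_le_wtS_of_eqOn_compl q hq hagree
  have := minDist_le_wdist q ha hb hne
  omega

theorem card_le_wtS_compl_of_wtS_lt_minDist [DecidableEq ι] (hq : ∀ i, 0 < q i)
    {C : Finset (∀ i : ι, ZMod (q i))} {I : Finset ι} (hI : wtS q I < minDist q C) :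
    C.card ≤ wtS q Iᶜ := by
  have : ∀ i, NeZero (q i) := fun i => ⟨(hq i).ne'⟩
  calc C.card ≤ (Finset.univ : Finset (∀ i : ↥Iᶜ, ZMod (q i))).card :=
        Finset.card_le_card_of_injOn _ (fun _ _ => Finset.mem_univ _)
          (injOn_restrict_compl_of_wtS_lt_minDist q hq hI)
    _ = wtS q Iᶜ := card_pi_subtype_zmod q Iᶜ

end

theorem statement0_general {n : ℕ} (q : Fin n → ℕ) (hq : ∀ i, 2 ≤ q i)
    (C : Finset (∀ i : Fin n, ZMod (q i)))
    (I : Finset (Fin n)) (hI : wtS q I < minDist q C) :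
    C.card * wtS q I ≤ ∏ i, q i := by
  have hpos : ∀ i, 0 < q i := fun i => by have := hq i; omega
  calc C.card * wtS q I ≤ wtS q Iᶜ * wtS q I :=
        Nat.mul_le_mul_right _ (card_le_wtS_compl_of_wtS_lt_minDist q hpos hI)
    _ = ∏ i, q i := by rw [mul_comm]; exact Finset.prod_mul_prod_compl I q

/-- **Singleton bound for integer codes.** If `C` is an integer code of length `n`,
amplitude `N = ∏ i, q i`, cardinality `K = |C| ≥ 2` and minimum weighted distance `D`,
then for every set `I` of coordinates with `wt(I) < D` one has `K * wt(I) ≤ N`. -/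
theorem statement0 {n : ℕ} (hn : 1 ≤ n) (q : Fin n → ℕ) (hq : ∀ i, 2 ≤ q i)
    (C : Finset (∀ i : Fin n, ZMod (q i))) (hK : 2 ≤ C.card)
    (I : Finset (Fin n)) (hI : wtS q I < minDist q C) :
    C.card * wtS q I ≤ ∏ i, q i :=
  statement0_general q hq C I hI
end

section
/- Let q₁, …, qₙ ≥ 2 be pairwise coprime integers with N = q₁⋯qₙ, and let 2 ≤ K ≤ N. For any two distinct integers x, y with 0 ≤ x < K and 0 ≤ y < K, the weighted distance between their residue vectors satisfies K · ∏_{i : x ≢ y (mod qᵢ)} qᵢ > N. -/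
/-- The Chinese Remainder code: residue vectors of the integers `0 ≤ x < K`. -/
def CRcode {ι : Type} [Fintype ι] [DecidableEq ι] (q : ι → ℕ) (K : ℕ) :
    Finset (∀ i : ι, ZMod (q i)) :=
  (Finset.range K).image (fun x => fun i => (x : ZMod (q i)))

/-!
The coordinates where `x` and `y` agree form a set `T` of pairwise coprime moduli, so
`x ≡ y` modulo `∏_{i ∈ T} qᵢ`; two distinct numbers below `K` cannot be congruent modulo
anything `≥ K`, hence `∏_{i ∈ T} qᵢ < K`. Multiplying by the product over the complement
`S` of `T` gives `N < K · ∏_{i ∈ S} qᵢ`.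
-/

open scoped Function

theorem Nat.modEq_prod_of_pairwise_coprime {ι : Type*} {s : Finset ι} {q : ι → ℕ} {x y : ℕ}
    (hco : (s : Set ι).Pairwise (Nat.Coprime on q)) (h : ∀ i ∈ s, x ≡ y [MOD q i]) :
    x ≡ y [MOD ∏ i ∈ s, q i] := by
  rw [Nat.modEq_iff_dvd, Nat.cast_prod]
  exact Finset.prod_dvd_of_coprime (hco.mono' fun _ _ => Nat.isCoprime_iff_coprime.mpr)
    fun i hi => Nat.modEq_iff_dvd.mp (h i hi)

theorem Nat.ModEq.lt_of_ne_of_lt {m x y K : ℕ} (h : x ≡ y [MOD m]) (hxy : x ≠ y)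
    (hx : x < K) (hy : y < K) : m < K := by
  by_contra! hKm
  exact hxy (h.eq_of_lt_of_lt (hx.trans_le hKm) (hy.trans_le hKm))

theorem statement2_general {n : ℕ} (q : Fin n → ℕ)
    (hcop : ∀ i j : Fin n, i ≠ j → Nat.Coprime (q i) (q j))
    (K : ℕ) (hKN : K ≤ ∏ i, q i)
    (x y : ℕ) (hx : x < K) (hy : y < K) (hxy : x ≠ y) :
    (∏ i, q i) < K * ∏ i ∈ Finset.univ.filter (fun i => ¬ (x % q i = y % q i)), q i := by
  set T := Finset.univ.filter (fun i => x % q i = y % q i)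
  set S := Finset.univ.filter (fun i => ¬ (x % q i = y % q i))
  have hsplit : ∏ i, q i = (∏ i ∈ T, q i) * ∏ i ∈ S, q i :=
    (Finset.prod_filter_mul_prod_filter_not _ _ _).symm
  have hT : ∏ i ∈ T, q i < K :=
    (Nat.modEq_prod_of_pairwise_coprime (fun i _ j _ hij => hcop i j hij)
      fun i hi => (Finset.mem_filter.mp hi).2).lt_of_ne_of_lt hxy hx hy
  have hS : 0 < ∏ i ∈ S, q i :=
    Nat.pos_of_mul_pos_left (hsplit ▸ (Nat.zero_lt_of_lt hx).trans_le hKN)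
  rw [hsplit]
  exact Nat.mul_lt_mul_of_pos_right hT hS

/-- For pairwise coprime moduli and `2 ≤ K ≤ N`, any two distinct integers
`0 ≤ x, y < K` have residue vectors at weighted distance `> N / K`, i.e.
`K * ∏_{i : x ≢ y mod qᵢ} qᵢ > N`. -/
theorem statement2 {n : ℕ} (hn : 1 ≤ n) (q : Fin n → ℕ) (hq : ∀ i, 2 ≤ q i)
    (hcop : ∀ i j : Fin n, i ≠ j → Nat.Coprime (q i) (q j))
    (K : ℕ) (hK2 : 2 ≤ K) (hKN : K ≤ ∏ i, q i)
    (x y : ℕ) (hx : x < K) (hy : y < K) (hxy : x ≠ y) :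
    (∏ i, q i) < K * ∏ i ∈ Finset.univ.filter (fun i => ¬ (x % q i = y % q i)), q i :=
  statement2_general q hcop K hKN x y hx hy hxy
end

section
/- Let q₁, …, qₙ ≥ 2 be pairwise coprime integers with N = q₁⋯qₙ, and let 2 ≤ K ≤ N. The minimum weighted distance of the Chinese Remainder code CR(q, K) equals min{wt(I) : I ⊆ {1,…,n}, K · wt(I) > N}, where wt(I) = ∏_{i∈I} qᵢ. -/
variable {ι : Type} {q : ι → ℕ}

lemma wtS_dvd_of_forall_dvd (hcop : Pairwise fun i j => Nat.Coprime (q i) (q j))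
    {J : Finset ι} {m : ℕ} (h : ∀ j ∈ J, q j ∣ m) : wtS q J ∣ m := by
  have : ∏ j ∈ J, (q j : ℤ) ∣ m :=
    Finset.prod_dvd_of_coprime (fun i _ j _ hij => Nat.isCoprime_iff_coprime.2 (hcop hij))
      fun j hj => Int.natCast_dvd_natCast.2 (h j hj)
  exact_mod_cast this

lemma dvd_wtS_iff (hcop : Pairwise fun i j => Nat.Coprime (q i) (q j)) {i : ι} (hi : q i ≠ 1)
    {J : Finset ι} : q i ∣ wtS q J ↔ i ∈ J := by
  refine ⟨fun hdvd => ?_, Finset.dvd_prod_of_mem q⟩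
  by_contra hiJ
  have hcopJ : Nat.Coprime (q i) (wtS q J) :=
    Nat.Coprime.prod_right fun j hj => hcop fun hij => hiJ (hij ▸ hj)
  exact hi (hcopJ.eq_one_of_dvd hdvd)

variable [Fintype ι] [DecidableEq ι]

lemma prod_lt_mul_wdist (hcop : Pairwise fun i j => Nat.Coprime (q i) (q j)) (hq : ∀ i, 0 < q i)
    {K x y : ℕ} (hx : x < K) (hy : y < K) (hxy : x ≠ y) :
    ∏ i, q i < K * wdist q (fun i => (x : ZMod (q i))) (fun i => (y : ZMod (q i))) := by
  set I := Finset.univ.filter fun i => (x : ZMod (q i)) ≠ y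
  have hagree : wtS q Iᶜ ∣ ((x : ℤ) - y).natAbs := by
    refine wtS_dvd_of_forall_dvd hcop fun j hj => Int.natCast_dvd.1 ?_
    simp only [I, Finset.mem_compl, Finset.mem_filter, Finset.mem_univ, true_and, not_not] at hj
    exact (ZMod.intCast_eq_intCast_iff_dvd_sub y x (q j)).1 (by exact_mod_cast hj.symm)
  have hcompl : wtS q Iᶜ < K := (Nat.le_of_dvd (by omega) hagree).trans_lt (by omega)
  calc ∏ i, q i = wtS q I * wtS q Iᶜ := (Finset.prod_mul_prod_compl I q).symm
    _ < wtS q I * K := Nat.mul_lt_mul_of_pos_left hcompl (Finset.prod_pos fun i _ => hq i)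
    _ = K * wtS q I := mul_comm _ _

lemma wdist_zero_natCast_wtS_compl (hcop : Pairwise fun i j => Nat.Coprime (q i) (q j))
    (hq : ∀ i, q i ≠ 1) (I : Finset ι) :
    wdist q 0 (fun i => (wtS q Iᶜ : ZMod (q i))) = wtS q I := by
  refine congrArg (wtS q) (Finset.ext fun i => ?_)
  simp only [Finset.mem_filter, Finset.mem_univ, true_and, Pi.zero_apply, ne_eq,
    eq_comm (a := (0 : ZMod (q i))), ZMod.natCast_eq_zero_iff, dvd_wtS_iff hcop (hq i),
    Finset.mem_compl, not_not]

lemma setOf_wdist_CRcode_eq (hcop : Pairwise fun i j => Nat.Coprime (q i) (q j))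
    (hq : ∀ i, 1 < q i) {K : ℕ} (hKN : K ≤ ∏ i, q i) :
    {d : ℕ | ∃ a ∈ CRcode q K, ∃ b ∈ CRcode q K, a ≠ b ∧ d = wdist q a b} =
      {w : ℕ | ∃ I : Finset ι, (∏ i, q i) < K * wtS q I ∧ w = wtS q I} := by
  ext d
  simp only [CRcode, Finset.mem_image, Finset.mem_range, Set.mem_ofPred_eq]
  constructor
  · rintro ⟨_, ⟨x, hx, rfl⟩, _, ⟨y, hy, rfl⟩, hxy, rfl⟩
    have hxy' : x ≠ y := by rintro rfl; exact hxy rfl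
    exact ⟨_, prod_lt_mul_wdist hcop (fun i => (hq i).le) hx hy hxy', rfl⟩
  · rintro ⟨I, hI, rfl⟩
    have hcompl : wtS q Iᶜ < K := by
      rw [← Finset.prod_mul_prod_compl I q, mul_comm K] at hI
      exact Nat.lt_of_mul_lt_mul_left hI
    obtain ⟨i, hi⟩ : I.Nonempty := Finset.nonempty_iff_ne_empty.2 fun hI0 => by
      simp only [hI0, wtS, Finset.prod_empty, mul_one] at hI
      omega
    refine ⟨0, ⟨0, hcompl.pos, funext fun i => Nat.cast_zero⟩, _, ⟨_, hcompl, rfl⟩, ?_,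
      (wdist_zero_natCast_wtS_compl hcop (fun i => (hq i).ne') I).symm⟩
    intro h
    have hdvd : q i ∣ wtS q Iᶜ := (ZMod.natCast_eq_zero_iff _ _).1 (congrFun h i).symm
    exact Finset.mem_compl.1 ((dvd_wtS_iff hcop (hq i).ne').1 hdvd) hi

theorem statement3_general {n : ℕ} (q : Fin n → ℕ) (hq : ∀ i, 2 ≤ q i)
    (hcop : ∀ i j : Fin n, i ≠ j → Nat.Coprime (q i) (q j))
    (K : ℕ) (hKN : K ≤ ∏ i, q i) :
    minDist q (CRcode q K) =
      sInf {w : ℕ | ∃ I : Finset (Fin n), (∏ i, q i) < K * wtS q I ∧ w = wtS q I} := by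
  rw [minDist, setOf_wdist_CRcode_eq hcop hq hKN]

/-- The minimum weighted distance of the Chinese Remainder code `CR(q, K)` equals
`min {wt(I) ∣ I ⊆ {1,…,n}, K * wt(I) > N}`. -/
theorem statement3 {n : ℕ} (hn : 1 ≤ n) (q : Fin n → ℕ) (hq : ∀ i, 2 ≤ q i)
    (hcop : ∀ i j : Fin n, i ≠ j → Nat.Coprime (q i) (q j))
    (K : ℕ) (hK2 : 2 ≤ K) (hKN : K ≤ ∏ i, q i) :
    minDist q (CRcode q K) =
      sInf {w : ℕ | ∃ I : Finset (Fin n), (∏ i, q i) < K * wtS q I ∧ w = wtS q I} :=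
  statement3_general q hq hcop K hKN
end

section
/- Let q₁, …, qₙ ≥ 2 be pairwise coprime integers and 2 ≤ K ≤ q₁⋯qₙ. For every coordinate i ∈ {1,…,n} and every subset S ⊆ {1,…,n} \ {i} with wt(S) = ∏_{j∈S} q_j < K, there exist integers x ≠ y with 0 ≤ x, y < K such that x ≡ y (mod q_j) for all j ∈ S but x ≢ y (mod q_i). In particular, S is not a helper set for coordinate i in the Chinese Remainder code CR(q, K). -/
/-- `S` is a helper set for coordinate `i` in the code `C`: `i ∉ S` and any two codewords
agreeing on all coordinates of `S` also agree at coordinate `i`. -/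
def IsHelperSet {ι : Type} (q : ι → ℕ) (C : Finset (∀ i : ι, ZMod (q i)))
    (i : ι) (S : Finset ι) : Prop :=
  i ∉ S ∧ ∀ a ∈ C, ∀ b ∈ C, (∀ j ∈ S, a j = b j) → a i = b i

/-- Coordinate `i` has locality `r` in `C`: some helper set `S` for `i` has `wt(S) ≤ (q i)^r`. -/
def HasLocalityAt {ι : Type} (q : ι → ℕ) (C : Finset (∀ i : ι, ZMod (q i)))
    (i : ι) (r : ℝ) : Prop :=
  ∃ S : Finset ι, IsHelperSet q C i S ∧ (wtS q S : ℝ) ≤ (q i : ℝ) ^ r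

/-! The integers `0` and `wt(S)` both lie in `[0, K)` and agree modulo every `q j` with `j ∈ S`,
but `q i`, being coprime to `wt(S)` and at least `2`, does not divide their difference. -/

section

variable {ι : Type} (q : ι → ℕ)

theorem dvd_wtS {S : Finset ι} {j : ι} (hj : j ∈ S) : q j ∣ wtS q S :=
  Finset.dvd_prod_of_mem q hj

theorem not_dvd_wtS {i : ι} {S : Finset ι} (hi : q i ≠ 1)
    (hcop : ∀ j ∈ S, Nat.Coprime (q i) (q j)) : ¬ q i ∣ wtS q S :=
  fun h => hi (Nat.Coprime.eq_one_of_dvd (Nat.Coprime.prod_right hcop) h)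

theorem exists_modEq_not_modEq_of_wtS_lt {i : ι} {S : Finset ι} {K : ℕ} (hi : q i ≠ 1)
    (hcop : ∀ j ∈ S, Nat.Coprime (q i) (q j)) (hwt : wtS q S < K) :
    ∃ x y : ℕ, x < K ∧ y < K ∧ x ≠ y ∧
      (∀ j ∈ S, x ≡ y [MOD q j]) ∧ ¬ (x ≡ y [MOD q i]) := by
  have hsep : ¬ 0 ≡ wtS q S [MOD q i] :=
    fun h => not_dvd_wtS q hi hcop (Nat.modEq_zero_iff_dvd.mp h.symm)
  refine ⟨0, wtS q S, by omega, hwt, fun h => hsep (h ▸ rfl), fun j hj => ?_, hsep⟩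
  exact (Nat.modEq_zero_iff_dvd.mpr (dvd_wtS q hj)).symm

theorem not_isHelperSet_CRcode [Fintype ι] [DecidableEq ι] {K : ℕ} {i : ι} {S : Finset ι}
    {x y : ℕ} (hx : x < K) (hy : y < K) (hS : ∀ j ∈ S, x ≡ y [MOD q j])
    (hi : ¬ x ≡ y [MOD q i]) : ¬ IsHelperSet q (CRcode q K) i S := by
  rintro ⟨-, hhelp⟩
  have mem : ∀ z < K, (fun j => (z : ZMod (q j))) ∈ CRcode q K :=
    fun z hz => Finset.mem_image.mpr ⟨z, Finset.mem_range.mpr hz, rfl⟩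
  exact hi <| (ZMod.natCast_eq_natCast_iff _ _ _).mp <| hhelp _ (mem x hx) _ (mem y hy)
    fun j hj => (ZMod.natCast_eq_natCast_iff _ _ _).mpr (hS j hj)

end

theorem statement5_general {n : ℕ} (q : Fin n → ℕ) (hq : ∀ i, 2 ≤ q i)
    (hcop : ∀ i j : Fin n, i ≠ j → Nat.Coprime (q i) (q j))
    (K : ℕ)
    (i : Fin n) (S : Finset (Fin n)) (hiS : i ∉ S)
    (hwt : wtS q S < K) :
    (∃ x y : ℕ, x < K ∧ y < K ∧ x ≠ y ∧
      (∀ j ∈ S, x ≡ y [MOD q j]) ∧ ¬ (x ≡ y [MOD q i]))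
    ∧ ¬ IsHelperSet q (CRcode q K) i S := by
  have hi : q i ≠ 1 := by have := hq i; omega
  have hcopS : ∀ j ∈ S, Nat.Coprime (q i) (q j) :=
    fun j hj => hcop i j fun h => hiS (h ▸ hj)
  obtain ⟨x, y, hx, hy, hxy, hS, hni⟩ := exists_modEq_not_modEq_of_wtS_lt q hi hcopS hwt
  exact ⟨⟨x, y, hx, hy, hxy, hS, hni⟩, not_isHelperSet_CRcode q hx hy hS hni⟩

/-- In a Chinese Remainder code `CR(q, K)`, no set `S` with `wt(S) < K` can be a helper
set for a coordinate `i ∉ S`: there are distinct `x, y ∈ [0, K)` congruent modulo `q j`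
for all `j ∈ S` but not modulo `q i`. -/
theorem statement5 {n : ℕ} (hn : 1 ≤ n) (q : Fin n → ℕ) (hq : ∀ i, 2 ≤ q i)
    (hcop : ∀ i j : Fin n, i ≠ j → Nat.Coprime (q i) (q j))
    (K : ℕ) (hK2 : 2 ≤ K) (hKN : K ≤ ∏ i, q i)
    (i : Fin n) (S : Finset (Fin n)) (hiS : i ∉ S)
    (hwt : wtS q S < K) :
    (∃ x y : ℕ, x < K ∧ y < K ∧ x ≠ y ∧
      (∀ j ∈ S, x ≡ y [MOD q j]) ∧ ¬ (x ≡ y [MOD q i]))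
    ∧ ¬ IsHelperSet q (CRcode q K) i S :=
  statement5_general q hq hcop K i S hiS hwt
end

section
/- Let q₁, …, qₙ ≥ 2 be pairwise coprime integers, 2 ≤ K ≤ q₁⋯qₙ, and q_max = max_i qᵢ. If a coordinate i ∈ {1,…,n} has locality r > 0 in the Chinese Remainder code CR(q, K), then q_max^r ≥ K, i.e., r ≥ log(K)/log(q_max). -/
/-!
If `S` is a helper set for `i` and `wt(S) < K`, then `0` and `wt(S)` are both messages of the
code. Their codewords agree on `S`, since every `q j` with `j ∈ S` divides `wt(S)`, but differ
at `i`, since `q i ≠ 1` is coprime to `wt(S)`. Hence `K ≤ wt(S) ≤ q_i^r ≤ q_max^r`.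
-/

section CRcode

variable {ι : Type} [Fintype ι] [DecidableEq ι] {q : ι → ℕ} {K : ℕ}

theorem natCast_mem_CRcode {x : ℕ} (hx : x < K) :
    (fun i => (x : ZMod (q i))) ∈ CRcode q K :=
  Finset.mem_image.mpr ⟨x, Finset.mem_range.mpr hx, rfl⟩

theorem le_wtS_of_isHelperSet_CRcode {i : ι} {S : Finset ι} (hqi : q i ≠ 1)
    (hcop : ∀ j ∈ S, Nat.Coprime (q i) (q j)) (hS : IsHelperSet q (CRcode q K) i S) :
    K ≤ wtS q S := by
  by_contra! hlt
  have hagree : ∀ j ∈ S, ((0 : ℕ) : ZMod (q j)) = ((wtS q S : ℕ) : ZMod (q j)) := fun j hj => by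
    rw [Nat.cast_zero, eq_comm, ZMod.natCast_eq_zero_iff]
    exact Finset.dvd_prod_of_mem q hj
  have hdvd : q i ∣ wtS q S := by
    rw [← ZMod.natCast_eq_zero_iff, ← Nat.cast_zero, eq_comm]
    exact hS.2 _ (natCast_mem_CRcode (by omega)) _ (natCast_mem_CRcode hlt) hagree
  exact hqi (Nat.Coprime.eq_one_of_dvd (Nat.Coprime.prod_right hcop) hdvd)

end CRcode

theorem statement6_general {n : ℕ} (q : Fin n → ℕ) (hq : ∀ i, 2 ≤ q i)
    (hcop : ∀ i j : Fin n, i ≠ j → Nat.Coprime (q i) (q j))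
    (K : ℕ) (hK2 : 2 ≤ K)
    (i : Fin n) (r : ℝ) (hr : 0 < r)
    (hloc : HasLocalityAt q (CRcode q K) i r) :
    (K : ℝ) ≤ ((Finset.univ.sup q : ℕ) : ℝ) ^ r ∧
      Real.log (K : ℝ) / Real.log ((Finset.univ.sup q : ℕ) : ℝ) ≤ r := by
  obtain ⟨S, hS, hw⟩ := hloc
  have hKw : K ≤ wtS q S :=
    le_wtS_of_isHelperSet_CRcode (by have := hq i; omega)
      (fun j hj => hcop i j (ne_of_mem_of_not_mem hj hS.1).symm) hS
  have hqmax : q i ≤ Finset.univ.sup q := Finset.le_sup (Finset.mem_univ i)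
  have hmax : (1 : ℝ) < (Finset.univ.sup q : ℕ) := by
    have := hq i
    exact_mod_cast (by omega : 1 < Finset.univ.sup q)
  have hK : (K : ℝ) ≤ ((Finset.univ.sup q : ℕ) : ℝ) ^ r :=
    calc (K : ℝ) ≤ wtS q S := by exact_mod_cast hKw
      _ ≤ (q i : ℝ) ^ r := hw
      _ ≤ ((Finset.univ.sup q : ℕ) : ℝ) ^ r :=
        Real.rpow_le_rpow (by positivity) (by exact_mod_cast hqmax) hr.le
  exact ⟨hK, (Real.logb_le_iff_le_rpow hmax (by positivity)).2 hK⟩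

/-- If a coordinate `i` has locality `r > 0` in the Chinese Remainder code `CR(q, K)`,
then `q_max ^ r ≥ K`, i.e. `r ≥ log K / log q_max`. -/
theorem statement6 {n : ℕ} (hn : 1 ≤ n) (q : Fin n → ℕ) (hq : ∀ i, 2 ≤ q i)
    (hcop : ∀ i j : Fin n, i ≠ j → Nat.Coprime (q i) (q j))
    (K : ℕ) (hK2 : 2 ≤ K) (hKN : K ≤ ∏ i, q i)
    (i : Fin n) (r : ℝ) (hr : 0 < r)
    (hloc : HasLocalityAt q (CRcode q K) i r) :
    (K : ℝ) ≤ ((Finset.univ.sup q : ℕ) : ℝ) ^ r ∧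
      Real.log (K : ℝ) / Real.log ((Finset.univ.sup q : ℕ) : ℝ) ≤ r :=
  statement6_general q hq hcop K hK2 i r hr hloc
end

section
/- Let C_out ⊆ ℤ/q₁ℤ × ⋯ × ℤ/qₙℤ be an integer code with q_max = max_i qᵢ, let C_in ⊆ ℤ/ℓ₁ℤ × ⋯ × ℤ/ℓ_mℤ be an integer code with |C_in| ≥ q_max and locality r_in > 0, and let φ : {0,…,q_max−1} → C_in be injective. Then the concatenated code C_in ∘_φ C_out has locality r_in. -/
/-- The code `C` has locality `r`: every coordinate has locality `r` in `C`. -/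
def CodeHasLocality {ι : Type} (q : ι → ℕ) (C : Finset (∀ i : ι, ZMod (q i))) (r : ℝ) : Prop :=
  ∀ i, HasLocalityAt q C i r

/-- The concatenation of an outer integer code `Cout ⊆ ℤ/q₁ℤ × ⋯ × ℤ/qₙℤ` with an inner
integer code through an encoding map `φ`: each outer symbol `c i` (identified with its
representative `(c i).val ∈ {0, …, qᵢ - 1}`) is replaced by the inner codeword
`φ ((c i).val)`.  The result is an integer code indexed by `ι × κ`, whose modulus at
position `(i, j)` is `ℓ j`. -/
def concatCode {ι κ : Type} [Fintype ι] [DecidableEq ι] [Fintype κ] [DecidableEq κ]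
    (q : ι → ℕ) (ℓ : κ → ℕ) (Cout : Finset (∀ i : ι, ZMod (q i)))
    (φ : ℕ → ∀ j : κ, ZMod (ℓ j)) :
    Finset (∀ p : ι × κ, ZMod (ℓ p.2)) :=
  Cout.image (fun c p => φ ((c p.1).val) p.2)

theorem wtS_singleton_product {ι κ : Type} (ℓ : κ → ℕ) (i : ι) (S : Finset κ) :
    wtS (fun p : ι × κ => ℓ p.2) ({i} ×ˢ S) = wtS ℓ S := by
  simp [wtS]

section Concatenation

variable {ι κ : Type} [Fintype ι] [DecidableEq ι] [Fintype κ] [DecidableEq κ]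
  {q : ι → ℕ} {ℓ : κ → ℕ} {Cout : Finset (∀ i : ι, ZMod (q i))}
  {Cin : Finset (∀ j : κ, ZMod (ℓ j))} {φ : ℕ → ∀ j : κ, ZMod (ℓ j)}

/-- Inside block `i`, a helper set of the inner code still works, because every block of a
concatenated codeword is an inner codeword. -/
theorem IsHelperSet.concatCode (hφ : ∀ c ∈ Cout, ∀ i, φ (c i).val ∈ Cin) {i : ι} {j : κ}
    {S : Finset κ} (hS : IsHelperSet ℓ Cin j S) :
    IsHelperSet (fun p : ι × κ => ℓ p.2) (concatCode q ℓ Cout φ) (i, j) ({i} ×ˢ S) := by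
  obtain ⟨hjS, hagree⟩ := hS
  refine ⟨by simp [hjS], ?_⟩
  rintro _ ha _ hb hab
  obtain ⟨c, hc, rfl⟩ := Finset.mem_image.mp ha
  obtain ⟨c', hc', rfl⟩ := Finset.mem_image.mp hb
  exact hagree _ (hφ c hc i) _ (hφ c' hc' i) fun j' hj' => hab (i, j') (by simp [hj'])

theorem HasLocalityAt.concatCode (hφ : ∀ c ∈ Cout, ∀ i, φ (c i).val ∈ Cin) (i : ι) {j : κ}
    {r : ℝ} (h : HasLocalityAt ℓ Cin j r) :
    HasLocalityAt (fun p : ι × κ => ℓ p.2) (concatCode q ℓ Cout φ) (i, j) r := by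
  obtain ⟨S, hS, hwt⟩ := h
  exact ⟨{i} ×ˢ S, hS.concatCode hφ, by rwa [wtS_singleton_product]⟩

theorem CodeHasLocality.concatCode (hφ : ∀ c ∈ Cout, ∀ i, φ (c i).val ∈ Cin) {r : ℝ}
    (h : CodeHasLocality ℓ Cin r) :
    CodeHasLocality (fun p : ι × κ => ℓ p.2) (concatCode q ℓ Cout φ) r :=
  fun ⟨i, j⟩ => (h j).concatCode hφ i

end Concatenation

theorem ZMod.val_lt_sup {ι : Type} [Fintype ι] {q : ι → ℕ} (hq : ∀ i, q i ≠ 0) (i : ι)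
    (x : ZMod (q i)) : x.val < Finset.univ.sup q :=
  have : NeZero (q i) := ⟨hq i⟩
  (ZMod.val_lt x).trans_le (Finset.le_sup (Finset.mem_univ i))

theorem statement17_general {n m : ℕ}
    (q : Fin n → ℕ) (hq : ∀ i, 2 ≤ q i) (ℓ : Fin m → ℕ)
    (qmax : ℕ) (hqmax : qmax = Finset.univ.sup q)
    (Cout : Finset (∀ i : Fin n, ZMod (q i)))
    (Cin : Finset (∀ j : Fin m, ZMod (ℓ j)))
    (φ : ℕ → ∀ j : Fin m, ZMod (ℓ j))
    (hφmem : ∀ k < qmax, φ k ∈ Cin)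
    (rin : ℝ) (hloc : CodeHasLocality ℓ Cin rin) :
    CodeHasLocality (fun p : Fin n × Fin m => ℓ p.2) (concatCode q ℓ Cout φ) rin := by
  have hq0 : ∀ i, q i ≠ 0 := fun i => by have := hq i; omega
  subst hqmax
  exact hloc.concatCode fun c _ i => hφmem _ (ZMod.val_lt_sup hq0 i (c i))

/-- If the inner code has locality `r_in`, then the concatenated code has locality
`r_in`. -/
theorem statement17 {n m : ℕ} (hn : 1 ≤ n) (hm : 1 ≤ m)
    (q : Fin n → ℕ) (hq : ∀ i, 2 ≤ q i) (ℓ : Fin m → ℕ) (hℓ : ∀ j, 2 ≤ ℓ j)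
    (qmax : ℕ) (hqmax : qmax = Finset.univ.sup q)
    (Cout : Finset (∀ i : Fin n, ZMod (q i)))
    (Cin : Finset (∀ j : Fin m, ZMod (ℓ j))) (hCin : qmax ≤ Cin.card)
    (φ : ℕ → ∀ j : Fin m, ZMod (ℓ j))
    (hφmem : ∀ k < qmax, φ k ∈ Cin)
    (hφinj : ∀ k < qmax, ∀ k' < qmax, φ k = φ k' → k = k')
    (rin : ℝ) (hrin : 0 < rin) (hloc : CodeHasLocality ℓ Cin rin) :
    CodeHasLocality (fun p : Fin n × Fin m => ℓ p.2) (concatCode q ℓ Cout φ) rin :=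
  statement17_general q hq ℓ qmax hqmax Cout Cin φ hφmem rin hloc
end

section
/- Let q₁, …, q₆ ≥ 2 be pairwise coprime integers, q = max_i qᵢ, Q₁ = q₁q₂q₃, Q₂ = q₄q₅q₆, N = Q₁Q₂, Q = max{Q₁, Q₂}. Let u₁, u₂ ∈ ℤ satisfy u₁Q₁ + u₂Q₂ = 1, let λ₁, λ₂ ≥ 1 be integers with λ = max{λ₁, λ₂}, set G = u₁λ₁Q₁ + u₂λ₂Q₂ and assume G ≥ 0, and let D ≥ 1 be an integer. Consider the integer-TB code C = {a + bG : a, b nonnegative integers, 0 ≤ a + bG < N/D, 0 ≤ a + bλ < N/(Qq)}, whose codewords are the residue vectors (c mod q₁, …, c mod q₆) for c ∈ C. Then for every i ∈ {1,2,3}, any two elements c, c′ of C with c ≡ c′ (mod q_j) for both j ∈ {1,2,3} \ {i} satisfy c ≡ c′ (mod q_i); similarly, for every i ∈ {4,5,6}, any two elements c, c′ of C with c ≡ c′ (mod q_j) for both j ∈ {4,5,6} \ {i} satisfy c ≡ c′ (mod q_i). In other words, for each coordinate i, the remaining two coordinates of its group satisfy the recoverability condition for i. -/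
/-- Membership in the integer Tamo–Barg code (as a set of integers, whose codewords are
the residue vectors `(c mod q₁, …, c mod q₆)`): `c = a + b·G` for nonnegative integers
`a, b` with `0 ≤ c < N/D` and `0 ≤ a + b·λ < N/(Q·q)`. -/
def memTB (G lam Q qmx N D c : ℤ) : Prop :=
  ∃ a b : ℤ, 0 ≤ a ∧ 0 ≤ b ∧ c = a + b * G ∧
    0 ≤ c ∧ c * D < N ∧ 0 ≤ a + b * lam ∧ (a + b * lam) * (Q * qmx) < N

/-- Core lemma: local recoverability within one group. -/
lemma tbGroupRec (qi qj qk Qoth qmx Q N D G lam loth : ℤ)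
    (hqi : 0 < qi) (hqj : 0 < qj) (hqk : 0 < qk) (hQoth : 0 < Qoth)
    (hcjk : qi * (qj * qk) ∣ G - loth)
    (hN : N = (qi * (qj * qk)) * Qoth)
    (hQle : Qoth ≤ Q) (hqmxle : qi ≤ qmx)
    (hl : loth ≤ lam) (hl0 : 0 ≤ loth)
    (c c' : ℤ) (hc : memTB G lam Q qmx N D c) (hc' : memTB G lam Q qmx N D c')
    (hjk : c ≡ c' [ZMOD qj * qk]) :
    c ≡ c' [ZMOD qi] := by
  obtain ⟨a, b, ha, hb, hcab, -, -, hr0, hr1⟩ := hc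
  obtain ⟨a', b', ha', hb', hcab', -, -, hr0', hr1'⟩ := hc'
  obtain ⟨k, hk⟩ := hcjk
  have hM0 : 0 < qj * qk := mul_pos hqj hqk
  -- bound: a + b*lam < M  (and similarly for primed)
  have key : ∀ x y : ℤ, 0 ≤ x → 0 ≤ y → 0 ≤ x + y * lam →
      (x + y * lam) * (Q * qmx) < N → x + y * loth < qj * qk := by
    intro x y hx hy hxy hlt
    have h1 : (x + y * lam) * (Qoth * qi) ≤ (x + y * lam) * (Q * qmx) := by
      apply mul_le_mul_of_nonneg_left _ hxy
      exact mul_le_mul hQle hqmxle (le_of_lt hqi) (le_trans (le_of_lt hQoth) hQle)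
    have h2 : (x + y * lam) * (Qoth * qi) < (qi * (qj * qk)) * Qoth := by
      rw [← hN]; exact lt_of_le_of_lt h1 hlt
    have h3 : x + y * lam < qj * qk := by
      by_contra hcon
      push_neg at hcon
      have h5 : (qj * qk) * (Qoth * qi) ≤ (x + y * lam) * (Qoth * qi) :=
        mul_le_mul_of_nonneg_right hcon (by positivity)
      nlinarith
    have h4 : x + y * loth ≤ x + y * lam := by nlinarith
    linarith
  have hb1 : a + b * loth < qj * qk := key a b ha hb hr0 hr1
  have hb1' : a' + b' * loth < qj * qk := key a' b' ha' hb' hr0' hr1'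
  have hnn : 0 ≤ a + b * loth := by nlinarith
  have hnn' : 0 ≤ a' + b' * loth := by nlinarith
  -- c ≡ a + b*loth modulo P
  have h1 : qi * (qj * qk) ∣ c - (a + b * loth) := ⟨b * k, by rw [hcab]; linear_combination b * hk⟩
  have h1' : qi * (qj * qk) ∣ c' - (a' + b' * loth) := ⟨b' * k, by rw [hcab']; linear_combination b' * hk⟩
  have hMP : qj * qk ∣ qi * (qj * qk) := Dvd.intro_left qi rfl
  have hrr : qj * qk ∣ (a' + b' * loth) - (a + b * loth) := by
    have e1 : qj * qk ∣ c - (a + b * loth) := hMP.trans h1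
    have e2 : qj * qk ∣ c' - (a' + b' * loth) := hMP.trans h1'
    have e3 : qj * qk ∣ c' - c := Int.ModEq.dvd hjk
    have : (a' + b' * loth) - (a + b * loth)
        = (c - (a + b * loth)) - (c' - (a' + b' * loth)) + (c' - c) := by ring
    rw [this]; exact dvd_add (dvd_sub e1 e2) e3
  have heq : (a' + b' * loth) - (a + b * loth) = 0 := by
    refine Int.eq_zero_of_abs_lt_dvd hrr ?_
    rw [abs_lt]; constructor <;> linarith
  have hPdvd : qi * (qj * qk) ∣ c' - c := by
    have : c' - c = (c' - (a' + b' * loth)) - (c - (a + b * loth))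
        + ((a' + b' * loth) - (a + b * loth)) := by ring
    rw [this, heq, add_zero]; exact dvd_sub h1' h1
  have hqiP : qi ∣ qi * (qj * qk) := Dvd.intro _ rfl
  exact Int.modEq_iff_dvd.mpr (hqiP.trans hPdvd)

/-- **Local recoverability of integer Tamo–Barg codes.** With pairwise coprime
`q₁, …, q₆ ≥ 2`, `q = max qᵢ`, `Q₁ = q₁q₂q₃`, `Q₂ = q₄q₅q₆`, `N = Q₁Q₂`,
`Q = max{Q₁, Q₂}`, Bézout coefficients `u₁Q₁ + u₂Q₂ = 1`, integers `λ₁, λ₂ ≥ 1`,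
`λ = max{λ₁, λ₂}`, `G = u₁λ₁Q₁ + u₂λ₂Q₂ ≥ 0` and an integer `D ≥ 1`: for every
coordinate `i` of either group `{1,2,3}` or `{4,5,6}`, any two codewords agreeing
modulo the two other moduli of the group of `i` also agree modulo `q i`.
(Indices are `0`-based here, the groups being `{0,1,2}` and `{3,4,5}`.) -/
theorem statement18 (q : Fin 6 → ℕ) (hq : ∀ i, 2 ≤ q i)
    (hcop : ∀ i j : Fin 6, i ≠ j → Nat.Coprime (q i) (q j))
    (qmx : ℤ) (hqmx : qmx = ((Finset.univ.sup q : ℕ) : ℤ))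
    (Q1 Q2 N Q : ℤ)
    (hQ1 : Q1 = (q 0 : ℤ) * (q 1 : ℤ) * (q 2 : ℤ))
    (hQ2 : Q2 = (q 3 : ℤ) * (q 4 : ℤ) * (q 5 : ℤ))
    (hN : N = Q1 * Q2) (hQ : Q = max Q1 Q2)
    (u1 u2 : ℤ) (hu : u1 * Q1 + u2 * Q2 = 1)
    (l1 l2 : ℤ) (hl1 : 1 ≤ l1) (hl2 : 1 ≤ l2)
    (lam : ℤ) (hlam : lam = max l1 l2)
    (G : ℤ) (hG : G = u1 * l1 * Q1 + u2 * l2 * Q2) (hG0 : 0 ≤ G)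
    (D : ℤ) (hD : 1 ≤ D)
    (c c' : ℤ) (hc : memTB G lam Q qmx N D c) (hc' : memTB G lam Q qmx N D c')
    (i : Fin 6) :
    ((i = 0 ∨ i = 1 ∨ i = 2) →
      (∀ j : Fin 6, (j = 0 ∨ j = 1 ∨ j = 2) → j ≠ i → c ≡ c' [ZMOD (q j : ℤ)]) →
      c ≡ c' [ZMOD (q i : ℤ)])
    ∧ ((i = 3 ∨ i = 4 ∨ i = 5) →
      (∀ j : Fin 6, (j = 3 ∨ j = 4 ∨ j = 5) → j ≠ i → c ≡ c' [ZMOD (q j : ℤ)]) →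
      c ≡ c' [ZMOD (q i : ℤ)]) := by
  have hqpos : ∀ j : Fin 6, (0 : ℤ) < (q j : ℤ) := fun j => by
    have := hq j; exact_mod_cast Nat.lt_of_lt_of_le (by norm_num) this
  have hqmxle : ∀ j : Fin 6, (q j : ℤ) ≤ qmx := fun j => by
    rw [hqmx]; exact_mod_cast Finset.le_sup (Finset.mem_univ j)
  have hQ1pos : 0 < Q1 := by rw [hQ1]; exact mul_pos (mul_pos (hqpos 0) (hqpos 1)) (hqpos 2)
  have hQ2pos : 0 < Q2 := by rw [hQ2]; exact mul_pos (mul_pos (hqpos 3) (hqpos 4)) (hqpos 5)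
  have hdvd1 : Q1 ∣ G - l2 := ⟨u1 * (l1 - l2), by linear_combination hG + l2 * hu⟩
  have hdvd2 : Q2 ∣ G - l1 := ⟨u2 * (l2 - l1), by linear_combination hG + l1 * hu⟩
  have hcopZ : ∀ j k : Fin 6, j ≠ k →
      ((q j : ℤ).natAbs).Coprime ((q k : ℤ).natAbs) := fun j k h => by
    simpa using hcop j k h
  -- combined modular agreement
  have combine : ∀ (j k : Fin 6), j ≠ k → c ≡ c' [ZMOD (q j : ℤ)] →
      c ≡ c' [ZMOD (q k : ℤ)] → c ≡ c' [ZMOD (q j : ℤ) * (q k : ℤ)] := by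
    intro j k h hj hk
    exact (Int.modEq_and_modEq_iff_modEq_mul (hcopZ j k h)).mp ⟨hj, hk⟩
  have grp1 : ∀ (i j k : Fin 6), Q1 = (q i : ℤ) * ((q j : ℤ) * (q k : ℤ)) → j ≠ k →
      c ≡ c' [ZMOD (q j : ℤ)] → c ≡ c' [ZMOD (q k : ℤ)] → c ≡ c' [ZMOD (q i : ℤ)] := by
    intro i j k hfac hjk hmj hmk
    refine tbGroupRec (q i : ℤ) (q j : ℤ) (q k : ℤ) Q2 qmx Q N D G lam l2
      (hqpos i) (hqpos j) (hqpos k) hQ2pos (hfac ▸ hdvd1) (by rw [hN, hfac])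
      (hQ ▸ le_max_right _ _) (hqmxle i) (hlam ▸ le_max_right _ _) (by linarith)
      c c' hc hc' (combine j k hjk hmj hmk)
  have grp2 : ∀ (i j k : Fin 6), Q2 = (q i : ℤ) * ((q j : ℤ) * (q k : ℤ)) → j ≠ k →
      c ≡ c' [ZMOD (q j : ℤ)] → c ≡ c' [ZMOD (q k : ℤ)] → c ≡ c' [ZMOD (q i : ℤ)] := by
    intro i j k hfac hjk hmj hmk
    refine tbGroupRec (q i : ℤ) (q j : ℤ) (q k : ℤ) Q1 qmx Q N D G lam l1
      (hqpos i) (hqpos j) (hqpos k) hQ1pos (hfac ▸ hdvd2) (by rw [hN, hfac]; ring)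
      (hQ ▸ le_max_left _ _) (hqmxle i) (hlam ▸ le_max_left _ _) (by linarith)
      c c' hc hc' (combine j k hjk hmj hmk)
  fin_cases i
  · exact ⟨fun _ h => grp1 0 1 2 (by rw [hQ1]; ring) (by decide)
      (h 1 (by tauto) (by decide)) (h 2 (by tauto) (by decide)),
      fun h => by simp at h⟩
  · exact ⟨fun _ h => grp1 1 0 2 (by rw [hQ1]; ring) (by decide)
      (h 0 (by tauto) (by decide)) (h 2 (by tauto) (by decide)),
      fun h => by simp at h⟩
  · exact ⟨fun _ h => grp1 2 0 1 (by rw [hQ1]; ring) (by decide)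
      (h 0 (by tauto) (by decide)) (h 1 (by tauto) (by decide)),
      fun h => by simp at h⟩
  · exact ⟨fun h => by simp at h,
      fun _ h => grp2 3 4 5 (by rw [hQ2]; ring) (by decide)
      (h 4 (by tauto) (by decide)) (h 5 (by tauto) (by decide))⟩
  · exact ⟨fun h => by simp at h,
      fun _ h => grp2 4 3 5 (by rw [hQ2]; ring) (by decide)
      (h 3 (by tauto) (by decide)) (h 5 (by tauto) (by decide))⟩
  · exact ⟨fun h => by simp at h,
      fun _ h => grp2 5 3 4 (by rw [hQ2]; ring) (by decide)
      (h 3 (by tauto) (by decide)) (h 4 (by tauto) (by decide))⟩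
end
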